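/- Let Δ̃ₙ (n ≥ 4) be the simplicial complex on the 15n-element ground set consisting of the 3n image variables x_{ij} and the 12n camera variables a_{ijk} (1 ≤ i ≤ n, 1 ≤ j ≤ 3, 1 ≤ k ≤ 4), whose minimal nonfaces are the sets of the form (spread of a focal): for each minimal nonface N of Δₙ (profile a permutation of (3,3,0,…,0), (3,2,2,0,…,0), (2,2,2,2,0,…,0)), the set N ∪ {a_{ijk} : x_{ij} ∈ N, 1 ≤ k ≤ 4}. Then Δ̃ₙ is pure of dimension 13n + 2. -/

import Mathlib

open Finset

/-- The profile of a subset `U` of the ground set `{x_{ij}} = Fin n × Fin 3`: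
`profile U i` is the number of `j` with `x_{ij} ∈ U`. -/
def profileOf {n : ℕ} (U : Finset (Fin n × Fin 3)) (i : Fin n) : ℕ :=
  (U.filter (fun p => p.1 = i)).card

/-- A profile is *bad* if, up to permutation of the indices, it equals
`(3,3,0,…,0)`, `(3,2,2,0,…,0)` or `(2,2,2,2,0,…,0)`. -/
def IsBadProfile {n : ℕ} (c : Fin n → ℕ) : Prop :=
  (∃ i j, i ≠ j ∧ c i = 3 ∧ c j = 3 ∧ ∀ k, k ≠ i → k ≠ j → c k = 0) ∨
  (∃ i j k, i ≠ j ∧ i ≠ k ∧ j ≠ k ∧ c i = 3 ∧ c j = 2 ∧ c k = 2 ∧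
    ∀ l, l ≠ i → l ≠ j → l ≠ k → c l = 0) ∨
  (∃ i j k l, i ≠ j ∧ i ≠ k ∧ i ≠ l ∧ j ≠ k ∧ j ≠ l ∧ k ≠ l ∧
    c i = 2 ∧ c j = 2 ∧ c k = 2 ∧ c l = 2 ∧
    ∀ m, m ≠ i → m ≠ j → m ≠ k → m ≠ l → c m = 0)

/-- `U` is a face of the simplicial complex `Δₙ`: it contains no (minimal)
nonface, i.e. no subset whose profile is bad. -/
def IsFaceD (n : ℕ) (U : Finset (Fin n × Fin 3)) : Prop :=
  ¬ ∃ W : Finset (Fin n × Fin 3), W ⊆ U ∧ IsBadProfile (profileOf W)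

/-- `U` is a facet (maximal face) of `Δₙ`. -/
def IsFacetD (n : ℕ) (U : Finset (Fin n × Fin 3)) : Prop :=
  IsFaceD n U ∧ ∀ W : Finset (Fin n × Fin 3), IsFaceD n W → U ⊆ W → W = U

/-- A profile is a permutation of `(3,2,1,1,…,1)`. -/
def IsProfile321 {n : ℕ} (c : Fin n → ℕ) : Prop :=
  ∃ i j, i ≠ j ∧ c i = 3 ∧ c j = 2 ∧ ∀ k, k ≠ i → k ≠ j → c k = 1

/-- A profile is a permutation of `(2,2,2,1,…,1)`. -/
def IsProfile2221 {n : ℕ} (c : Fin n → ℕ) : Prop :=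
  ∃ i j k, i ≠ j ∧ i ≠ k ∧ j ≠ k ∧ c i = 2 ∧ c j = 2 ∧ c k = 2 ∧
    ∀ l, l ≠ i → l ≠ j → l ≠ k → c l = 1

/-- The ground set of `Δ̃ₙ`: the `3n` image variables `x_{ij}` together with the
`12n` camera variables `a_{ijk}`. -/
abbrev TGround (n : ℕ) := (Fin n × Fin 3) ⊕ (Fin n × Fin 3 × Fin 4)

/-- The minimal nonface of `Δ̃ₙ` attached to a set `N` of `x`-variables (the
spread of a focal): `N` together with all four camera variables `a_{ijk}` for
every `x_{ij} ∈ N`. -/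
def tildeNonface {n : ℕ} (N : Finset (Fin n × Fin 3)) : Finset (TGround n) :=
  N.image Sum.inl ∪
    (N ×ˢ (Finset.univ : Finset (Fin 4))).image
      (fun q => Sum.inr (q.1.1, q.1.2, q.2))

/-- `U` is a face of `Δ̃ₙ`: it contains no set `tildeNonface N` for `N` a set of
`x`-variables with bad profile. -/
def IsFaceT (n : ℕ) (U : Finset (TGround n)) : Prop :=
  ¬ ∃ N : Finset (Fin n × Fin 3),
      IsBadProfile (profileOf N) ∧ tildeNonface N ⊆ U

/-- `U` is a facet (maximal face) of `Δ̃ₙ`. -/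
def IsFacetT (n : ℕ) (U : Finset (TGround n)) : Prop :=
  IsFaceT n U ∧ ∀ W : Finset (TGround n), IsFaceT n W → U ⊆ W → W = U

/-!
Group the `15n` variables into the `3n` blocks `{x_{ij}, a_{ij1}, …, a_{ij4}}`. A set `U` is a
face of `Δ̃ₙ` iff its set of full blocks is a face of `Δₙ`. Hence a facet of `Δ̃ₙ` misses exactly
one element of each block that is not full, and its full blocks form a facet `F` of `Δₙ`, so it
has `4 · 3n + |F|` elements.

Whether a set of `x`-variables is a face of `Δₙ` depends only on the numbers `a` and `b` of
indices `i` with profile `≥ 3` and `≥ 2`: it is a face iff `a ≤ 1`, `b ≤ 3` and not both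
`a = 1`, `b = 3`. Adding variables to a facet shows that its profile has no zero entry and
that `a + b = 3`, so `|F| = n + b + a = n + 3`.
-/

open Function

section Counting

variable {ι : Type*} [Fintype ι]

def countGE (c : ι → ℕ) (t : ℕ) : ℕ := #{i | t ≤ c i}

/-- On `Fin n`, a profile is crowded iff it dominates a bad profile. -/
def Crowded (c : ι → ℕ) : Prop :=
  2 ≤ countGE c 3 ∨ (1 ≤ countGE c 3 ∧ 3 ≤ countGE c 2) ∨ 4 ≤ countGE c 2

lemma card_le_countGE {c : ι → ℕ} {t : ℕ} {s : Finset ι} (h : ∀ i ∈ s, t ≤ c i) :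
    #s ≤ countGE c t :=
  card_le_card fun i hi => mem_filter.2 ⟨mem_univ _, h i hi⟩

lemma countGE_mono {c d : ι → ℕ} (h : c ≤ d) (t : ℕ) : countGE c t ≤ countGE d t :=
  card_le_card (monotone_filter_right _ fun i _ hi => hi.trans (h i))

lemma Crowded.mono {c d : ι → ℕ} (hc : Crowded c) (h : c ≤ d) : Crowded d := by
  have h2 := countGE_mono h 2
  have h3 := countGE_mono h 3
  unfold Crowded at *
  omega

lemma countGE_update [DecidableEq ι] (c : ι → ℕ) (i : ι) (t : ℕ) :
    countGE (update c i (c i + 1)) t = countGE c t + if t = c i + 1 then 1 else 0 := by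
  have key : ∀ m, (if t ≤ update c i (c i + 1) m then 1 else 0) =
      (if t ≤ c m then 1 else 0) + if i = m then (if t = c i + 1 then 1 else 0) else 0 := by
    intro m
    rcases eq_or_ne i m with rfl | h
    · simp only [update_self, if_true]
      split_ifs <;> omega
    · simp [h, Ne.symm h]
  simp only [countGE, card_filter, key, sum_add_distrib, sum_ite_eq, mem_univ, if_true]

lemma sum_eq_countGE {c : ι → ℕ} (hc : ∀ i, c i ≤ 3) :
    ∑ i, c i = countGE c 1 + countGE c 2 + countGE c 3 := by
  simp only [countGE, card_filter, ← sum_add_distrib]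
  refine sum_congr rfl fun i _ => ?_
  have := hc i
  split_ifs <;> omega

theorem sum_eq_card_add_three_of_maximal [DecidableEq ι] (hι : 3 ≤ Fintype.card ι)
    {c : ι → ℕ} (hc : ∀ i, c i ≤ 3) (hface : ¬ Crowded c)
    (hmax : ∀ i, c i < 3 → Crowded (update c i (c i + 1))) :
    ∑ i, c i = Fintype.card ι + 3 := by
  -- Bumping a `0` (resp. a `1`) raises only `countGE c 1` (resp. `countGE c 2`).
  have hpos : ∀ i, 1 ≤ c i := by
    intro i
    by_contra h0
    have hi := hmax i (by omega)
    rw [Crowded, countGE_update, countGE_update, show c i = 0 by omega] at hi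
    unfold Crowded at hface
    simp only [zero_add, OfNat.ofNat_ne_one, ↓reduceIte, add_zero] at hi
    omega
  have hone : countGE c 1 = Fintype.card ι := by
    simp [countGE, hpos]
  have hsum := sum_eq_countGE hc
  unfold Crowded at hface
  by_contra hne
  obtain ⟨i, -, hi⟩ := exists_mem_notMem_of_card_lt_card
    (s := {i | 2 ≤ c i}) (t := univ) (by rw [card_univ]; change countGE c 2 < _; omega)
  have hi1 : c i = 1 := by
    have := hpos i
    simp only [mem_filter, mem_univ, true_and] at hi
    omega
  have hbump := hmax i (by omega)
  rw [Crowded, countGE_update, countGE_update, hi1] at hbump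
  simp only [Nat.reduceAdd, Nat.succ_ne_self, ↓reduceIte, add_zero, Nat.reduceLeDiff] at hbump
  omega

end Counting

section

variable {n : ℕ}

lemma IsBadProfile.crowded {c : Fin n → ℕ} (h : IsBadProfile c) : Crowded c := by
  rcases h with ⟨i, j, hij, hi, hj, -⟩ | ⟨i, j, k, hij, hik, hjk, hi, hj, hk, -⟩ |
    ⟨i, j, k, l, hij, hik, hil, hjk, hjl, hkl, hi, hj, hk, hl, -⟩
  · left
    simpa [hij] using card_le_countGE (c := c) (t := 3) (s := {i, j}) (by simp [hi, hj])
  · right; left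
    refine ⟨by simpa using card_le_countGE (c := c) (t := 3) (s := {i}) (by simp [hi]), ?_⟩
    simpa [hij, hik, hjk] using
      card_le_countGE (c := c) (t := 2) (s := {i, j, k}) (by simp [hi, hj, hk])
  · right; right
    simpa [hij, hik, hil, hjk, hjl, hkl] using
      card_le_countGE (c := c) (t := 2) (s := {i, j, k, l}) (by simp [hi, hj, hk, hl])

lemma Crowded.exists_isBadProfile_le {c : Fin n → ℕ} (h : Crowded c) :
    ∃ d, IsBadProfile d ∧ d ≤ c := by
  rcases h with h | ⟨h3, h2⟩ | h
  · obtain ⟨i, hi, j, hj, hij⟩ := one_lt_card.1 h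
    simp only [mem_filter, mem_univ, true_and] at hi hj
    refine ⟨fun m => if m = i ∨ m = j then 3 else 0,
      Or.inl ⟨i, j, hij, by simp, by simp, fun m hmi hmj => by simp [hmi, hmj]⟩,
      fun m => by grind⟩
  · obtain ⟨i, hi⟩ := card_pos.1 h3
    simp only [mem_filter, mem_univ, true_and] at hi
    have : 1 < #(({m | 2 ≤ c m} : Finset (Fin n)).erase i) := by
      rw [card_erase_of_mem (by simp; omega)]
      change 1 < countGE c 2 - 1
      omega
    obtain ⟨j, hj, k, hk, hjk⟩ := one_lt_card.1 this
    simp only [mem_erase, mem_filter, mem_univ, true_and] at hj hk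
    refine ⟨fun m => if m = i then 3 else if m = j ∨ m = k then 2 else 0,
      Or.inr (Or.inl ⟨i, j, k, hj.1.symm, hk.1.symm, hjk, by simp, by simp [hj.1],
        by simp [hk.1], fun m hmi hmj hmk => by simp [hmi, hmj, hmk]⟩), fun m => by grind⟩
  · obtain ⟨i, hi⟩ := card_pos.1 (show 0 < countGE c 2 by omega)
    have : 2 < #(({m | 2 ≤ c m} : Finset (Fin n)).erase i) := by
      rw [card_erase_of_mem hi]
      change 2 < countGE c 2 - 1
      omega
    simp only [mem_filter, mem_univ, true_and] at hi
    obtain ⟨j, hj, k, hk, l, hl, hjk, hjl, hkl⟩ := two_lt_card.1 this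
    simp only [mem_erase, mem_filter, mem_univ, true_and] at hj hk hl
    refine ⟨fun m => if m = i ∨ m = j ∨ m = k ∨ m = l then 2 else 0,
      Or.inr (Or.inr ⟨i, j, k, l, hj.1.symm, hk.1.symm, hl.1.symm, hjk, hjl, hkl,
        by simp, by simp, by simp, by simp, fun m h1 h2 h3 h4 => by simp [h1, h2, h3, h4]⟩),
      fun m => by grind⟩

lemma profileOf_eq_card (U : Finset (Fin n × Fin 3)) (i : Fin n) :
    profileOf U i = #{j | (i, j) ∈ U} :=
  card_nbij' Prod.snd (Prod.mk i) (by intro p; simp +contextual [eq_comm])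
    (by intro j; simp) (by intro p; simp +contextual [eq_comm]) (by intro j; simp)

lemma profileOf_le_three (U : Finset (Fin n × Fin 3)) (i : Fin n) : profileOf U i ≤ 3 :=
  profileOf_eq_card U i ▸ card_le_univ _

lemma exists_notMem_of_profileOf_lt {U : Finset (Fin n × Fin 3)} {i : Fin n}
    (h : profileOf U i < 3) : ∃ j, (i, j) ∉ U := by
  rw [profileOf_eq_card] at h
  obtain ⟨j, -, hj⟩ := exists_mem_notMem_of_card_lt_card (s := {j | (i, j) ∈ U}) (t := univ)
    (by rwa [card_univ, Fintype.card_fin])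
  exact ⟨j, by simpa using hj⟩

lemma profileOf_mono {W U : Finset (Fin n × Fin 3)} (h : W ⊆ U) : profileOf W ≤ profileOf U :=
  fun _ => card_le_card (filter_subset_filter _ h)

lemma profileOf_insert {U : Finset (Fin n × Fin 3)} {x : Fin n × Fin 3} (hx : x ∉ U) :
    profileOf (insert x U) = update (profileOf U) x.1 (profileOf U x.1 + 1) := by
  funext k
  unfold profileOf
  rw [filter_insert]
  rcases eq_or_ne x.1 k with rfl | hne
  · rw [if_pos rfl, update_self, card_insert_of_notMem fun h => hx (mem_filter.1 h).1]
  · rw [if_neg hne, update_of_ne hne.symm]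

lemma card_eq_sum_profileOf (U : Finset (Fin n × Fin 3)) : #U = ∑ i, profileOf U i :=
  card_eq_sum_card_fiberwise fun x _ => mem_univ x.1

lemma exists_subset_profileOf_eq {U : Finset (Fin n × Fin 3)} {d : Fin n → ℕ}
    (h : d ≤ profileOf U) : ∃ W ⊆ U, profileOf W = d := by
  choose T hTU hTd using fun i => exists_subset_card_eq (h i)
  refine ⟨univ.biUnion T, biUnion_subset.2 fun i _ => (hTU i).trans (filter_subset _ _),
    funext fun i => ?_⟩
  rw [← hTd i, profileOf]
  congr 1
  ext p
  simp only [mem_filter, mem_biUnion, mem_univ, true_and]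
  constructor
  · rintro ⟨⟨k, hk⟩, rfl⟩
    rwa [(mem_filter.1 (hTU k hk)).2]
  · intro hp
    exact ⟨⟨i, hp⟩, (mem_filter.1 (hTU i hp)).2⟩

theorem isFaceD_iff_not_crowded (U : Finset (Fin n × Fin 3)) :
    IsFaceD n U ↔ ¬ Crowded (profileOf U) := by
  refine not_congr ⟨fun ⟨W, hWU, hW⟩ => hW.crowded.mono (profileOf_mono hWU), fun h => ?_⟩
  obtain ⟨d, hd, hdU⟩ := h.exists_isBadProfile_le
  obtain ⟨W, hWU, rfl⟩ := exists_subset_profileOf_eq hdU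
  exact ⟨W, hWU, hd⟩

lemma IsFaceD.mono {W U : Finset (Fin n × Fin 3)} (hU : IsFaceD n U) (h : W ⊆ U) :
    IsFaceD n W :=
  fun ⟨V, hVW, hV⟩ => hU ⟨V, hVW.trans h, hV⟩

theorem IsFacetD.card_eq (hn : 3 ≤ n) {F : Finset (Fin n × Fin 3)} (hF : IsFacetD n F) :
    #F = n + 3 := by
  have hmax : ∀ i, profileOf F i < 3 →
      Crowded (update (profileOf F) i (profileOf F i + 1)) := by
    intro i hi
    obtain ⟨j, hj⟩ := exists_notMem_of_profileOf_lt hi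
    rw [← profileOf_insert hj, ← not_not (a := Crowded _), ← isFaceD_iff_not_crowded]
    exact fun hface => hj (hF.2 _ hface (subset_insert _ _) ▸ mem_insert_self _ _)
  simpa [card_eq_sum_profileOf] using sum_eq_card_add_three_of_maximal (by simpa using hn)
    (profileOf_le_three F) ((isFaceD_iff_not_crowded F).1 hF.1) hmax

def blockOf : TGround n → Fin n × Fin 3
  | .inl p => p
  | .inr (i, j, _) => (i, j)

def block (p : Fin n × Fin 3) : Finset (TGround n) := {g | blockOf g = p}

def fullBlocks (U : Finset (TGround n)) : Finset (Fin n × Fin 3) := {p | block p ⊆ U}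

@[simp] lemma mem_block {p : Fin n × Fin 3} {g : TGround n} : g ∈ block p ↔ blockOf g = p := by
  simp [block]

lemma mem_fullBlocks {U : Finset (TGround n)} {p : Fin n × Fin 3} :
    p ∈ fullBlocks U ↔ block p ⊆ U := by
  simp [fullBlocks]

lemma card_block (p : Fin n × Fin 3) : #(block p) = 5 := by
  have : block p = cons (.inl p) (univ.image fun k => .inr (p.1, p.2, k)) (by simp) := by
    ext (q | ⟨i, j, k⟩) <;> simp [blockOf, Prod.ext_iff, eq_comm]
  rw [this, card_cons, card_image_of_injective _ fun _ _ => by simp]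
  simp

lemma tildeNonface_eq_biUnion (N : Finset (Fin n × Fin 3)) : tildeNonface N = N.biUnion block := by
  ext (q | ⟨i, j, k⟩) <;> simp [tildeNonface, blockOf]

lemma tildeNonface_subset_iff {N : Finset (Fin n × Fin 3)} {U : Finset (TGround n)} :
    tildeNonface N ⊆ U ↔ N ⊆ fullBlocks U := by
  rw [tildeNonface_eq_biUnion, biUnion_subset]
  exact ⟨fun h p hp => mem_fullBlocks.2 (h p hp), fun h p hp => mem_fullBlocks.1 (h hp)⟩

theorem isFaceT_iff (U : Finset (TGround n)) : IsFaceT n U ↔ IsFaceD n (fullBlocks U) := by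
  simp only [IsFaceT, IsFaceD, tildeNonface_subset_iff, and_comm]

lemma IsFacetT.block_subset_insert {U : Finset (TGround n)} (hU : IsFacetT n U) {g : TGround n}
    (hg : g ∉ U) : block (blockOf g) ⊆ insert g U := by
  -- Otherwise `insert g U` has the same full blocks as `U`.
  by_contra h
  refine hg (hU.2 _ ?_ (subset_insert _ _) ▸ mem_insert_self _ _)
  refine (isFaceT_iff _).2 (((isFaceT_iff U).1 hU.1).mono fun q hq => ?_)
  rw [mem_fullBlocks] at hq ⊢
  have hgq : g ∉ block q := fun hgq => h (mem_block.1 hgq ▸ hq)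
  exact (subset_insert_iff_of_notMem hgq).1 hq

lemma IsFacetT.card_block_sdiff_le_one {U : Finset (TGround n)} (hU : IsFacetT n U)
    (p : Fin n × Fin 3) : #(block p \ U) ≤ 1 := by
  refine card_le_one.2 fun g hg g' hg' => ?_
  rw [mem_sdiff, mem_block] at hg hg'
  have := hU.block_subset_insert hg.2 (hg.1 ▸ mem_block.2 hg'.1)
  exact ((mem_insert.1 this).resolve_right hg'.2).symm

lemma IsFacetT.card_filter_blockOf_eq {U : Finset (TGround n)} (hU : IsFacetT n U)
    (p : Fin n × Fin 3) : #{g ∈ U | blockOf g = p} = 4 + if p ∈ fullBlocks U then 1 else 0 := by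
  have hsplit := card_inter_add_card_sdiff (block p) U
  rw [card_block, inter_comm] at hsplit
  have hle := hU.card_block_sdiff_le_one p
  have hfilter : {g ∈ U | blockOf g = p} = U ∩ block p := by ext; simp
  rw [hfilter]
  by_cases hp : block p ⊆ U
  · rw [sdiff_eq_empty_iff_subset.2 hp, card_empty] at hsplit
    rw [if_pos (mem_fullBlocks.2 hp)]
    omega
  · rw [if_neg (mt mem_fullBlocks.1 hp)]
    have := card_pos.2 (sdiff_nonempty.2 hp)
    omega

theorem IsFacetT.card_eq {U : Finset (TGround n)} (hU : IsFacetT n U) :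
    #U = 12 * n + #(fullBlocks U) := by
  rw [card_eq_sum_card_fiberwise (f := blockOf) (t := univ) fun _ _ => mem_univ _]
  simp only [hU.card_filter_blockOf_eq, sum_add_distrib, sum_boole]
  simp only [sum_const, card_univ, Fintype.card_prod, Fintype.card_fin, smul_eq_mul, fullBlocks,
    mem_filter, mem_univ, true_and, Nat.cast_id]
  ring

theorem IsFacetT.fullBlocks_isFacetD {U : Finset (TGround n)} (hU : IsFacetT n U) :
    IsFacetD n (fullBlocks U) := by
  refine ⟨(isFaceT_iff U).1 hU.1, fun W hW hUW => Subset.antisymm (fun p hp => ?_) hUW⟩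
  set V := U ∪ W.biUnion block
  have hV : fullBlocks V ⊆ W := by
    intro q hq
    by_contra hqW
    refine hqW (hUW (mem_fullBlocks.2 fun g hg => ?_))
    rcases mem_union.1 (mem_fullBlocks.1 hq hg) with h | h
    · exact h
    · obtain ⟨p, hp, hgp⟩ := mem_biUnion.1 h
      exact absurd ((mem_block.1 hg) ▸ mem_block.1 hgp ▸ hp) hqW
  have hVU : V = U := hU.2 V ((isFaceT_iff V).2 (hW.mono hV)) subset_union_left
  exact mem_fullBlocks.2 (hVU ▸ (subset_biUnion_of_mem block hp).trans subset_union_right)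

lemma fullBlocks_empty : fullBlocks (∅ : Finset (TGround n)) = ∅ := by
  ext p
  simp only [mem_fullBlocks, subset_empty, notMem_empty, iff_false]
  exact ne_empty_of_mem (mem_block.2 (show blockOf (.inl p) = p from rfl))

theorem exists_isFacetT (n : ℕ) : ∃ U, IsFacetT n U := by
  have hempty : IsFaceT n ∅ := by
    rw [isFaceT_iff, fullBlocks_empty, isFaceD_iff_not_crowded]
    simp [Crowded, countGE, profileOf]
  obtain ⟨U, hU⟩ := (Set.toFinite {U | IsFaceT n U}).exists_maximal ⟨∅, hempty⟩
  exact ⟨U, hU.1, fun W hW hUW => (hU.2 hW hUW).antisymm hUW⟩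

end

/-- `Δ̃ₙ` (`n ≥ 4`) is pure of dimension `13n + 2`: every facet has exactly
`13n + 3` elements. -/
theorem tilde_Delta_n_pure (n : ℕ) (hn : 4 ≤ n) :
    (∀ U : Finset (TGround n), IsFacetT n U → U.card = 13 * n + 3) ∧
    ∃ U : Finset (TGround n), IsFacetT n U := by
  refine ⟨fun U hU => ?_, exists_isFacetT n⟩
  rw [hU.card_eq, hU.fullBlocks_isFacetD.card_eq (by omega)]
  ring
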